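/- arXiv:2511.13301 — 3 statements merged into one kernel-verified Lean document; each statement's English description precedes it below -/
import Mathlib

section
/- Let G be a graph, k a natural number, and let u, v be a nonadjacent pair of vertices of G with at least k + c common neighbors. Then for every set S of at most k vertices such that G - S is c-closed, S contains u or v. -/
def IsCClosed {V : Type*} (G : SimpleGraph V) (c : ℕ) : Prop :=
  ∀ u v : V, u ≠ v → ¬ G.Adj u v → (G.commonNeighbors u v).ncard < c

/-! Deleting `S` removes at most `|S| ≤ k` of the common neighbours of `u` and `v`, so if both
survive they still have at least `c` common neighbours in `G - S`. -/

namespace SimpleGraph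

variable {V : Type*} (G : SimpleGraph V)

theorem image_val_commonNeighbors_induce (s : Set V) (u v : s) :
    Subtype.val '' (G.induce s).commonNeighbors u v = G.commonNeighbors u v ∩ s := by
  ext w
  constructor
  · rintro ⟨⟨w, hw⟩, hwN, rfl⟩
    exact ⟨hwN, hw⟩
  · rintro ⟨hwN, hw⟩
    exact ⟨⟨w, hw⟩, hwN, rfl⟩

theorem ncard_commonNeighbors_induce (s : Set V) (u v : s) :
    ((G.induce s).commonNeighbors u v).ncard = (G.commonNeighbors u v ∩ s).ncard := by
  rw [← image_val_commonNeighbors_induce, Set.ncard_image_of_injective _ Subtype.val_injective]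

theorem ncard_commonNeighbors_le_induce_compl_add_card (S : Finset V)
    (u v : ((S : Set V)ᶜ : Set V)) :
    (G.commonNeighbors u v).ncard
      ≤ ((G.induce (S : Set V)ᶜ).commonNeighbors u v).ncard + S.card := by
  rw [ncard_commonNeighbors_induce, ← Set.sdiff_eq, ← Set.ncard_coe_finset]
  exact Set.ncard_le_ncard_sdiff_add_ncard _ _

end SimpleGraph

theorem badPair_many_connecting_general {V : Type*} (G : SimpleGraph V)
    (c k : ℕ) (u v : V) (hne : u ≠ v) (hnadj : ¬ G.Adj u v)
    (hmany : k + c ≤ (G.commonNeighbors u v).ncard)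
    (S : Finset V) (hS : S.card ≤ k)
    (hclosed : IsCClosed (G.induce ((↑S : Set V)ᶜ)) c) :
    u ∈ S ∨ v ∈ S := by
  by_contra! h
  let u' : ((S : Set V)ᶜ : Set V) := ⟨u, h.1⟩
  let v' : ((S : Set V)ᶜ : Set V) := ⟨v, h.2⟩
  have hfew := hclosed u' v' (Subtype.coe_ne_coe.mp hne) hnadj
  have hdrop : (G.commonNeighbors u v).ncard
      ≤ ((G.induce (S : Set V)ᶜ).commonNeighbors u' v').ncard + S.card :=
    G.ncard_commonNeighbors_le_induce_compl_add_card S u' v'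
  omega

/-- If a nonadjacent pair `u, v` has at least `k + c` common neighbors, then every
vertex set `S` of size at most `k` whose deletion makes the graph `c`-closed
must contain `u` or `v`. -/
theorem badPair_many_connecting {V : Type*} [Fintype V] (G : SimpleGraph V)
    (c k : ℕ) (u v : V) (hne : u ≠ v) (hnadj : ¬ G.Adj u v)
    (hmany : k + c ≤ (G.commonNeighbors u v).ncard)
    (S : Finset V) (hS : S.card ≤ k)
    (hclosed : IsCClosed (G.induce ((↑S : Set V)ᶜ)) c) :
    u ∈ S ∨ v ∈ S :=
  badPair_many_connecting_general G c k u v hne hnadj hmany S hS hclosed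
end

section
/- For every natural number s ≥ 1, there exists a graph G (a clique on 2s vertices together with two extra vertices v1, v2, where v1 is adjacent to s of the clique vertices and v2 to the other s clique vertices) such that G minus {v1, v2} is 1-closed, yet every vertex of the clique has a nonneighbor with which it shares at least s common neighbors whenever s ≥ 3. -/
theorem Fin.ncard_setOf_val_lt {n m : ℕ} : {i : Fin n | (i : ℕ) < m}.ncard = min n m := by
  rw [← Fin.card_filter_val_lt, ← Set.ncard_coe_finset]
  simp

theorem Fin.ncard_setOf_le_val {n m : ℕ} : {i : Fin n | m ≤ (i : ℕ)}.ncard = n - m := by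
  have h := Set.ncard_add_ncard_compl {i : Fin n | (i : ℕ) < m}
  simp only [Set.compl_ofPred, not_lt, Fin.ncard_setOf_val_lt, Nat.card_eq_fintype_card,
    Fintype.card_fin] at h
  omega

theorem isCClosed_top {V : Type*} (c : ℕ) : IsCClosed (⊤ : SimpleGraph V) c :=
  fun _ _ huv hnadj => absurd huv hnadj

namespace SimpleGraph

variable {α β : Type*}

def splitGraph (N : β → Set α) : SimpleGraph (α ⊕ β) where
  Adj
    | .inl a, .inl a' => a ≠ a'
    | .inl a, .inr b => a ∈ N b
    | .inr b, .inl a => a ∈ N b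
    | .inr _, .inr _ => False
  symm := ⟨fun
    | .inl _, .inl _, h => Ne.symm h
    | .inl _, .inr _, h => h
    | .inr _, .inl _, h => h⟩
  loopless := ⟨fun
    | .inl _, h => h rfl⟩

variable (N : β → Set α)

@[simp]
theorem splitGraph_adj_inl_inl {a a' : α} : (splitGraph N).Adj (.inl a) (.inl a') ↔ a ≠ a' :=
  Iff.rfl

@[simp]
theorem splitGraph_adj_inr_inl {a : α} {b : β} : (splitGraph N).Adj (.inr b) (.inl a) ↔ a ∈ N b :=
  Iff.rfl

@[simp]
theorem splitGraph_not_adj_inr_inr (b b' : β) : ¬ (splitGraph N).Adj (.inr b) (.inr b') :=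
  id

theorem isClique_splitGraph {s : Set (α ⊕ β)} (hs : s ⊆ Set.range Sum.inl) :
    (splitGraph N).IsClique s := by
  rintro _ hx _ hy hxy
  obtain ⟨a, rfl⟩ := hs hx
  obtain ⟨a', rfl⟩ := hs hy
  exact fun h => hxy (congrArg Sum.inl h)

theorem splitGraph_commonNeighbors_inl_inr {a : α} {b : β} (h : a ∉ N b) :
    (splitGraph N).commonNeighbors (.inl a) (.inr b) = Sum.inl '' N b := by
  ext (a' | b')
  · simp only [mem_commonNeighbors, splitGraph_adj_inl_inl, splitGraph_adj_inr_inl,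
      Sum.inl_injective.mem_set_image]
    exact ⟨And.right, fun ha' => ⟨fun haa' => h (haa' ▸ ha'), ha'⟩⟩
  · simp only [mem_commonNeighbors, splitGraph_not_adj_inr_inr, and_false, false_iff]
    rintro ⟨_, _, ⟨⟩⟩

theorem ncard_splitGraph_commonNeighbors_inl_inr {a : α} {b : β} (h : a ∉ N b) :
    ((splitGraph N).commonNeighbors (.inl a) (.inr b)).ncard = (N b).ncard := by
  rw [splitGraph_commonNeighbors_inl_inr N h, Set.ncard_image_of_injective _ Sum.inl_injective]

end SimpleGraph

open SimpleGraph in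
theorem exists_graph_small_deletion_large_weakClosure_general (s : ℕ) :
    ∃ G : SimpleGraph (Fin (2 * s) ⊕ Fin 2),
      (∀ i j : Fin (2 * s), i ≠ j → G.Adj (Sum.inl i) (Sum.inl j)) ∧
      (∀ i : Fin (2 * s), G.Adj (Sum.inr 0) (Sum.inl i) ↔ (i : ℕ) < s) ∧
      (∀ i : Fin (2 * s), G.Adj (Sum.inr 1) (Sum.inl i) ↔ s ≤ (i : ℕ)) ∧
      ¬ G.Adj (Sum.inr 0) (Sum.inr 1) ∧
      IsCClosed (G.induce {x : Fin (2 * s) ⊕ Fin 2 |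
        x ≠ Sum.inr 0 ∧ x ≠ Sum.inr 1}) 1 ∧
      (3 ≤ s → ∀ i : Fin (2 * s), ∃ y : Fin (2 * s) ⊕ Fin 2,
        Sum.inl i ≠ y ∧ ¬ G.Adj (Sum.inl i) y ∧
        s ≤ (G.commonNeighbors (Sum.inl i) y).ncard) := by
  set N : Fin 2 → Set (Fin (2 * s)) := ![{i | (i : ℕ) < s}, {i | s ≤ (i : ℕ)}]
  have hclique : (splitGraph N).IsClique {x | x ≠ Sum.inr 0 ∧ x ≠ Sum.inr 1} := by
    refine isClique_splitGraph N ?_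
    rintro (a | b) ⟨h0, h1⟩
    · exact ⟨a, rfl⟩
    · fin_cases b <;> contradiction
  have hfar (i : Fin (2 * s)) : ∃ b, i ∉ N b ∧ (N b).ncard = s := by
    by_cases hi : (i : ℕ) < s
    · exact ⟨1, by simpa [N] using hi, by simp [N, Fin.ncard_setOf_le_val, two_mul]⟩
    · exact ⟨0, by simpa [N] using hi, by simp [N, Fin.ncard_setOf_val_lt, two_mul]⟩
  refine ⟨splitGraph N, fun _ _ => (splitGraph_adj_inl_inl N).2, fun _ => Iff.rfl,
    fun _ => Iff.rfl, splitGraph_not_adj_inr_inr N 0 1, ?_, fun _ i => ?_⟩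
  · rw [induce_eq_top.2 hclique]
    exact isCClosed_top 1
  · obtain ⟨b, hib, hcard⟩ := hfar i
    refine ⟨.inr b, Sum.inl_ne_inr, hib, ?_⟩
    rw [ncard_splitGraph_commonNeighbors_inl_inr N hib, hcard]

/-- For every `s ≥ 1` there is a graph consisting of a clique on `2s` vertices plus
two extra vertices `v₁ = inr 0`, `v₂ = inr 1`, where `v₁` is adjacent to the first
`s` clique vertices and `v₂` to the other `s`, such that deleting `{v₁, v₂}` leaves a
`1`-closed graph, yet (for `s ≥ 3`) every clique vertex has a nonneighbor with which
it shares at least `s` common neighbors. -/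
theorem exists_graph_small_deletion_large_weakClosure (s : ℕ) (hs : 1 ≤ s) :
    ∃ G : SimpleGraph (Fin (2 * s) ⊕ Fin 2),
      (∀ i j : Fin (2 * s), i ≠ j → G.Adj (Sum.inl i) (Sum.inl j)) ∧
      (∀ i : Fin (2 * s), G.Adj (Sum.inr 0) (Sum.inl i) ↔ (i : ℕ) < s) ∧
      (∀ i : Fin (2 * s), G.Adj (Sum.inr 1) (Sum.inl i) ↔ s ≤ (i : ℕ)) ∧
      ¬ G.Adj (Sum.inr 0) (Sum.inr 1) ∧
      IsCClosed (G.induce {x : Fin (2 * s) ⊕ Fin 2 |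
        x ≠ Sum.inr 0 ∧ x ≠ Sum.inr 1}) 1 ∧
      (3 ≤ s → ∀ i : Fin (2 * s), ∃ y : Fin (2 * s) ⊕ Fin 2,
        Sum.inl i ≠ y ∧ ¬ G.Adj (Sum.inl i) y ∧
        s ≤ (G.commonNeighbors (Sum.inl i) y).ncard) :=
  exists_graph_small_deletion_large_weakClosure_general s
end

section
/- Let c ≥ 1 and let G be the graph consisting of an independent set W of size c together with two additional vertices v1 and v2, each adjacent to all vertices of W and not to each other. Then G is (c+1)-closed but not c-closed, and deleting any single vertex of G yields a c-closed graph. -/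
/-- The complete bipartite-like graph on an independent set `W` of size `c` plus two
extra vertices `v₁, v₂` (each adjacent to all of `W`, not to each other):
edges are exactly between the two sides. -/
def starPairGraph (c : ℕ) : SimpleGraph (Fin c ⊕ Fin 2) :=
  SimpleGraph.fromRel (fun a b => a.isLeft = true ∧ b.isRight = true)

/-!
Distinct vertices `u, v` are never common neighbours of themselves, so in a graph on `n`
vertices they have at most `n - 2` common neighbours. Hence every graph on at most `c + 1`
vertices is `c`-closed; this gives `(c + 1)`-closedness of the graph (on `c + 2` vertices) and
`c`-closedness of each vertex-deleted subgraph (on `c + 1` vertices). It is not `c`-closed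
because `v₁` and `v₂` are nonadjacent with all `c` vertices of `W` as common neighbours.
-/

namespace SimpleGraph

variable {V W : Type*}

lemma ncard_commonNeighbors_add_two_le [Finite V] (G : SimpleGraph V) {u v : V} (huv : u ≠ v) :
    (G.commonNeighbors u v).ncard + 2 ≤ Nat.card V := by
  have hsub : G.commonNeighbors u v ⊆ {u, v}ᶜ := by
    rintro w hw (rfl | rfl)
    exacts [G.notMem_commonNeighbors_left _ _ hw, G.notMem_commonNeighbors_right _ _ hw]
  calc (G.commonNeighbors u v).ncard + 2
      ≤ ({u, v}ᶜ : Set V).ncard + ({u, v} : Set V).ncard := by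
        rw [Set.ncard_pair huv]; exact Nat.add_le_add_right (Set.ncard_le_ncard hsub) 2
    _ = Nat.card V := by rw [add_comm, Set.ncard_add_ncard_compl]

lemma isCClosed_of_card_le [Finite V] (G : SimpleGraph V) {c : ℕ} (hV : Nat.card V ≤ c + 1) :
    IsCClosed G c := fun _ _ huv _ => by
  have := G.ncard_commonNeighbors_add_two_le huv
  omega

lemma completeBipartiteGraph_commonNeighbors_inr (a b : W) :
    (completeBipartiteGraph V W).commonNeighbors (.inr a) (.inr b) = Set.range Sum.inl := by
  ext (x | x) <;> simp [mem_commonNeighbors]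

lemma not_isCClosed_completeBipartiteGraph [Finite V] {a b : W} (hab : a ≠ b) :
    ¬ IsCClosed (completeBipartiteGraph V W) (Nat.card V) := fun h => by
  have := h (.inr a) (.inr b) (by simpa using hab) (by simp)
  rw [completeBipartiteGraph_commonNeighbors_inr,
    Set.ncard_range_of_injective Sum.inl_injective] at this
  exact this.false

end SimpleGraph

open SimpleGraph

lemma starPairGraph_eq_completeBipartiteGraph (c : ℕ) :
    starPairGraph c = completeBipartiteGraph (Fin c) (Fin 2) := by
  ext (a | a) (b | b) <;> simp [starPairGraph]

theorem starPairGraph_closure_general (c : ℕ) :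
    IsCClosed (starPairGraph c) (c + 1) ∧
      ¬ IsCClosed (starPairGraph c) c ∧
      ∀ x : Fin c ⊕ Fin 2,
        IsCClosed ((starPairGraph c).induce {y | y ≠ x}) c := by
  refine ⟨isCClosed_of_card_le _ (by simp), ?_, fun x => isCClosed_of_card_le _ ?_⟩
  · rw [starPairGraph_eq_completeBipartiteGraph]
    simpa using not_isCClosed_completeBipartiteGraph (V := Fin c) (show (0 : Fin 2) ≠ 1 by decide)
  · rw [Nat.card_eq_fintype_card, Set.card_ne_eq]; simp

/-- The graph `starPairGraph c` is `(c+1)`-closed but not `c`-closed, and deleting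
any single vertex yields a `c`-closed graph. -/
theorem starPairGraph_closure (c : ℕ) (hc : 1 ≤ c) :
    IsCClosed (starPairGraph c) (c + 1) ∧
      ¬ IsCClosed (starPairGraph c) c ∧
      ∀ x : Fin c ⊕ Fin 2,
        IsCClosed ((starPairGraph c).induce {y | y ≠ x}) c :=
  starPairGraph_closure_general c
end
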